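/- arXiv:2407.07175 — 4 statements merged into one kernel-verified Lean document; each statement's English description precedes it below -/
import Mathlib

section
/- Let θ, η > 0 be constants and let p̃, ṽ, ψ̂ : [0,∞) → ℝ be differentiable functions satisfying p̃′(t) = −θ p̃(t), ṽ′(t) = −ψ̂(t) ṽ(t), and ψ̂′(t) = η ṽ(t)² for all t ≥ 0. Then ψ̂ is nondecreasing and bounded, hence converges to a finite limit as t → ∞, and ∫₀^∞ ṽ(t)² dt < ∞. -/
/-!
The gain law is tuned so that the energy `η ṽ² + ψ̂²` is conserved: its derivative is
`2η ṽ (-ψ̂ ṽ) + 2ψ̂ (η ṽ²) = 0`. Hence `ψ̂` is bounded, and being nondecreasing it converges.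
Since `η ṽ²` is the (nonnegative) derivative of the convergent function `ψ̂`, it is integrable
on `[0, ∞)`.
-/

open Set Filter Topology MeasureTheory

lemma monotoneOn_of_hasDerivWithinAt_self_nonneg {s : Set ℝ} (hs : Convex ℝ s) {f f' : ℝ → ℝ}
    (hf : ∀ x ∈ s, HasDerivWithinAt f (f' x) s x) (hf' : ∀ x ∈ s, 0 ≤ f' x) :
    MonotoneOn f s :=
  monotoneOn_of_hasDerivWithinAt_nonneg hs (fun x hx => (hf x hx).continuousWithinAt)
    (fun x hx => (hf x (interior_subset hx)).mono interior_subset)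
    (fun x hx => hf' x (interior_subset hx))

lemma MonotoneOn.exists_tendsto_atTop_of_bddAbove {α β : Type*} [LinearOrder α]
    [ConditionallyCompleteLinearOrder β] [TopologicalSpace β] [OrderTopology β]
    {f : α → β} {a : α} (hf : MonotoneOn f (Ici a)) (hbdd : BddAbove (f '' Ici a)) :
    ∃ l, Tendsto f atTop (𝓝 l) := by
  set g : α → β := fun t => f (max a t)
  have hg : Monotone g := fun s t hst =>
    hf le_sup_left le_sup_left (max_le_max le_rfl hst)
  have hg_bdd : BddAbove (range g) :=
    hbdd.mono (range_subset_iff.2 fun t => mem_image_of_mem f le_sup_left)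
  have hfg : g =ᶠ[atTop] f := by
    filter_upwards [eventually_ge_atTop a] with t ht
    simp only [g, max_eq_right ht]
  exact ⟨_, (tendsto_atTop_ciSup hg hg_bdd).congr' hfg⟩

section AdaptiveGain

variable {η : ℝ} {v ψ : ℝ → ℝ} {a : ℝ}

lemma hasDerivWithinAt_energy {s : Set ℝ} {t : ℝ}
    (hv : HasDerivWithinAt v (-(ψ t) * v t) s t) (hψ : HasDerivWithinAt ψ (η * v t ^ 2) s t) :
    HasDerivWithinAt (fun t => η * v t ^ 2 + ψ t ^ 2) 0 s t := by
  refine (((hv.pow 2).const_mul η).add (hψ.pow 2)).congr_deriv ?_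
  push_cast
  ring

lemma energy_eq_of_ge
    (hv : ∀ t ∈ Ici a, HasDerivWithinAt v (-(ψ t) * v t) (Ici a) t)
    (hψ : ∀ t ∈ Ici a, HasDerivWithinAt ψ (η * v t ^ 2) (Ici a) t) {t : ℝ} (ht : a ≤ t) :
    η * v t ^ 2 + ψ t ^ 2 = η * v a ^ 2 + ψ a ^ 2 := by
  have hE : ∀ x ∈ Ici a, HasDerivWithinAt (fun t => η * v t ^ 2 + ψ t ^ 2) 0 (Ici a) x :=
    fun x hx => hasDerivWithinAt_energy (hv x hx) (hψ x hx)
  exact constant_of_has_deriv_right_zero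
    (fun x hx => (hE x hx.1).continuousWithinAt.mono Icc_subset_Ici_self)
    (fun x hx => (hE x hx.1).mono (Ici_subset_Ici.2 hx.1)) t ⟨ht, le_rfl⟩

lemma gain_le_sqrt_energy (hη : 0 ≤ η)
    (hv : ∀ t ∈ Ici a, HasDerivWithinAt v (-(ψ t) * v t) (Ici a) t)
    (hψ : ∀ t ∈ Ici a, HasDerivWithinAt ψ (η * v t ^ 2) (Ici a) t) {t : ℝ} (ht : a ≤ t) :
    ψ t ≤ √(η * v a ^ 2 + ψ a ^ 2) := by
  refine Real.le_sqrt_of_sq_le ?_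
  rw [← energy_eq_of_ge hv hψ ht]
  have : 0 ≤ η * v t ^ 2 := by positivity
  linarith

end AdaptiveGain

theorem qabc_gain_bounded_and_v_square_integrable_general (η : ℝ) (hη : 0 < η)
    (v ψ : ℝ → ℝ)
    (hv : ∀ t ∈ Set.Ici (0:ℝ), HasDerivWithinAt v (-(ψ t) * v t) (Set.Ici 0) t)
    (hψ : ∀ t ∈ Set.Ici (0:ℝ), HasDerivWithinAt ψ (η * (v t) ^ 2) (Set.Ici 0) t) :
    MonotoneOn ψ (Set.Ici 0) ∧ (∃ M : ℝ, ∀ t ∈ Set.Ici (0:ℝ), ψ t ≤ M) ∧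
      (∃ l : ℝ, Filter.Tendsto ψ Filter.atTop (nhds l)) ∧
      MeasureTheory.IntegrableOn (fun t => (v t) ^ 2) (Set.Ici 0) := by
  have hmono : MonotoneOn ψ (Ici 0) :=
    monotoneOn_of_hasDerivWithinAt_self_nonneg (convex_Ici 0) hψ fun t _ => by positivity
  have hbound : ∀ t ∈ Ici (0:ℝ), ψ t ≤ √(η * v 0 ^ 2 + ψ 0 ^ 2) :=
    fun t ht => gain_le_sqrt_energy hη.le hv hψ ht
  obtain ⟨l, hl⟩ := hmono.exists_tendsto_atTop_of_bddAbove ⟨_, forall_mem_image.2 hbound⟩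
  have hint : IntegrableOn (fun t => η * v t ^ 2) (Ioi 0) :=
    integrableOn_Ioi_deriv_of_nonneg (hψ 0 self_mem_Ici).continuousWithinAt
      (fun t ht => (hψ t (mem_Ici_of_Ioi ht)).hasDerivAt (Ici_mem_nhds ht))
      (fun t _ => by positivity) hl
  refine ⟨hmono, ⟨_, hbound⟩, ⟨l, hl⟩, (integrableOn_Ici_iff_integrableOn_Ioi).2 ?_⟩
  simpa [IntegrableOn, hη.ne'] using hint.const_mul η⁻¹

/-- **Boundedness and integrability in the proof of Theorem 1.** Along the closed-loop
dynamics `p̃′ = −θ p̃`, `ṽ′ = −ψ̂ ṽ`, `ψ̂′ = η ṽ²`, the adaptive gain `ψ̂` is nondecreasing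
and bounded, hence converges to a finite limit, and `∫₀^∞ ṽ(t)² dt < ∞`. -/
theorem qabc_gain_bounded_and_v_square_integrable (θ η : ℝ) (hθ : 0 < θ) (hη : 0 < η)
    (p v ψ : ℝ → ℝ)
    (hp : ∀ t ∈ Set.Ici (0:ℝ), HasDerivWithinAt p (-θ * p t) (Set.Ici 0) t)
    (hv : ∀ t ∈ Set.Ici (0:ℝ), HasDerivWithinAt v (-(ψ t) * v t) (Set.Ici 0) t)
    (hψ : ∀ t ∈ Set.Ici (0:ℝ), HasDerivWithinAt ψ (η * (v t) ^ 2) (Set.Ici 0) t) :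
    MonotoneOn ψ (Set.Ici 0) ∧ (∃ M : ℝ, ∀ t ∈ Set.Ici (0:ℝ), ψ t ≤ M) ∧
      (∃ l : ℝ, Filter.Tendsto ψ Filter.atTop (nhds l)) ∧
      MeasureTheory.IntegrableOn (fun t => (v t) ^ 2) (Set.Ici 0) :=
  qabc_gain_bounded_and_v_square_integrable_general η hη v ψ hv hψ
end

section
/- Let μ₁, λ > 0 and Λ = (Λ₁, Λ₂, Λ₃) ∈ ℝ³ with Λᵢ > 0 for each i. Let s, Λ̂ : [0,∞) → ℝ³ be differentiable and satisfy ⟨s(t), s′(t)⟩ = −μ₁ ‖s(t)‖² − Σᵢ Λ̂ᵢ(t) |sᵢ(t)| and Λ̂ᵢ′(t) = λ |sᵢ(t)| for each i and all t ≥ 0. Then s(t) → 0 as t → ∞. -/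
open Filter Set Topology
open scoped RealInnerProductSpace

/-!
Write `L = ‖s‖²/2 + ‖Λ̂‖²/(2λ)`. The adaptation law makes `⟪Λ̂, Λ̂'⟫/λ` cancel the switching
term of `⟪s, s'⟫` exactly, so `L' = -μ₁‖s‖² ≤ 0`. Hence `L ≥ 0` is non-increasing and converges;
each `Λ̂ᵢ` is non-decreasing and bounded by `√(2λ L(0))`, so it converges too. Therefore
`‖s‖² = 2L - ‖Λ̂‖²/λ` has a limit `ℓ`, and `ℓ > 0` would eventually force `L' ≤ -μ₁ℓ/2`,
driving `L` below `0`.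
-/

theorem MonotoneOn.exists_tendsto_atTop {α β : Type*} [Preorder α] [IsDirectedOrder α]
    [ConditionallyCompleteLinearOrder β] [TopologicalSpace β] [OrderTopology β]
    {f : α → β} {a : α} (hf : MonotoneOn f (Ici a)) (hbdd : BddAbove (f '' Ici a)) :
    ∃ l, Tendsto f atTop (𝓝 l) :=
  ⟨_, tendsto_comp_val_Ici_atTop.mp <|
    tendsto_atTop_ciSup (monotoneOn_iff_monotone.mp hf) (by rwa [← image_eq_range])⟩

theorem AntitoneOn.exists_tendsto_atTop {α β : Type*} [Preorder α] [IsDirectedOrder α]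
    [ConditionallyCompleteLinearOrder β] [TopologicalSpace β] [OrderTopology β]
    {f : α → β} {a : α} (hf : AntitoneOn f (Ici a)) (hbdd : BddBelow (f '' Ici a)) :
    ∃ l, Tendsto f atTop (𝓝 l) :=
  MonotoneOn.exists_tendsto_atTop (β := βᵒᵈ) hf.dual_right hbdd

section Convex

variable {D : Set ℝ} {f f' : ℝ → ℝ}

theorem Convex.monotoneOn_of_hasDerivWithinAt_nonneg (hD : Convex ℝ D)
    (hf : ∀ x ∈ D, HasDerivWithinAt f (f' x) D x) (hf' : ∀ x ∈ D, 0 ≤ f' x) :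
    MonotoneOn f D :=
  _root_.monotoneOn_of_hasDerivWithinAt_nonneg hD (fun x hx => (hf x hx).continuousWithinAt)
    (fun x hx => (hf x (interior_subset hx)).mono interior_subset)
    (fun x hx => hf' x (interior_subset hx))

theorem Convex.antitoneOn_of_hasDerivWithinAt_nonpos (hD : Convex ℝ D)
    (hf : ∀ x ∈ D, HasDerivWithinAt f (f' x) D x) (hf' : ∀ x ∈ D, f' x ≤ 0) :
    AntitoneOn f D :=
  _root_.antitoneOn_of_hasDerivWithinAt_nonpos hD (fun x hx => (hf x hx).continuousWithinAt)
    (fun x hx => (hf x (interior_subset hx)).mono interior_subset)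
    (fun x hx => hf' x (interior_subset hx))

end Convex

/-- If `ℓ > 0`, then eventually `V' ≤ -ℓ/2`, so `V` would decrease linearly to `-∞`. -/
theorem nonpos_of_tendsto_of_hasDerivWithinAt_le_neg {V V' w : ℝ → ℝ} {a B ℓ : ℝ}
    (hV : ∀ t ∈ Ici a, HasDerivWithinAt V (V' t) (Ici a) t)
    (hV' : ∀ t ∈ Ici a, V' t ≤ -w t) (hB : ∀ t ∈ Ici a, B ≤ V t)
    (hw : Tendsto w atTop (𝓝 ℓ)) : ℓ ≤ 0 := by
  by_contra! hℓ
  obtain ⟨T, hT⟩ := eventually_atTop.mp (hw.eventually (eventually_gt_nhds (half_lt_self hℓ)))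
  set T' := max T a
  have hsub : Ici T' ⊆ Ici a := Ici_subset_Ici.mpr (le_max_right T a)
  have hanti : AntitoneOn (fun t => V t + ℓ / 2 * t) (Ici T') := by
    refine (convex_Ici T').antitoneOn_of_hasDerivWithinAt_nonpos
      (fun t ht => ((hV t (hsub ht)).mono hsub).add ((hasDerivWithinAt_id t _).const_mul _))
      (fun t ht => ?_)
    linarith [hT t (le_trans (le_max_left T a) ht), hV' t (hsub ht)]
  have hgrow : Tendsto (fun t => B + ℓ / 2 * t) atTop atTop :=
    tendsto_atTop_add_const_left _ _ (tendsto_id.const_mul_atTop (half_pos hℓ))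
  obtain ⟨t, ht, hbig⟩ := ((eventually_ge_atTop T').and
    (hgrow.eventually_gt_atTop (V T' + ℓ / 2 * T'))).exists
  have hdecr : V t + ℓ / 2 * t ≤ V T' + ℓ / 2 * T' := hanti self_mem_Ici ht ht
  linarith [hB t (hsub ht)]

section SlidingDynamics

variable {ι : Type*} [Fintype ι]

theorem EuclideanSpace.hasDerivWithinAt_apply {f f' : ℝ → EuclideanSpace ℝ ι} {D : Set ℝ} {t : ℝ}
    (hf : HasDerivWithinAt f (f' t) D t) (i : ι) :
    HasDerivWithinAt (fun t => f t i) (f' t i) D t :=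
  (PiLp.hasFDerivAt_apply 2 (f t) i).comp_hasDerivWithinAt t hf

noncomputable def slidingLyapunov (lam : ℝ) (s Λhat : ℝ → EuclideanSpace ℝ ι) (t : ℝ) : ℝ :=
  ‖s t‖ ^ 2 / 2 + ‖Λhat t‖ ^ 2 / (2 * lam)

theorem slidingLyapunov_nonneg {lam : ℝ} (hlam : 0 ≤ lam) (s Λhat : ℝ → EuclideanSpace ℝ ι)
    (t : ℝ) : 0 ≤ slidingLyapunov lam s Λhat t := by
  unfold slidingLyapunov; positivity

theorem hasDerivWithinAt_slidingLyapunov {μ₁ lam t : ℝ} {D : Set ℝ}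
    {s Λhat s' Λhat' : ℝ → EuclideanSpace ℝ ι} (hlam : lam ≠ 0)
    (hs : HasDerivWithinAt s (s' t) D t) (hΛhat : HasDerivWithinAt Λhat (Λhat' t) D t)
    (hclosed : ⟪s t, s' t⟫ = -μ₁ * ‖s t‖ ^ 2 - ∑ i, Λhat t i * |s t i|)
    (hadapt : ∀ i, Λhat' t i = lam * |s t i|) :
    HasDerivWithinAt (slidingLyapunov lam s Λhat) (-μ₁ * ‖s t‖ ^ 2) D t := by
  refine ((hs.norm_sq.div_const 2).add (hΛhat.norm_sq.div_const (2 * lam))).congr_deriv ?_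
  have hinner : ⟪Λhat t, Λhat' t⟫ = lam * ∑ i, Λhat t i * |s t i| := by
    simp only [PiLp.inner_apply, RCLike.inner_apply', conj_trivial, hadapt, Finset.mul_sum]
    exact Finset.sum_congr rfl fun i _ => by ring
  rw [hclosed, hinner]
  field_simp
  ring

theorem norm_sq_le_slidingLyapunov {lam : ℝ} (hlam : 0 < lam) (s Λhat : ℝ → EuclideanSpace ℝ ι)
    (t : ℝ) : ‖Λhat t‖ ^ 2 ≤ 2 * lam * slidingLyapunov lam s Λhat t := by
  have : 2 * lam * slidingLyapunov lam s Λhat t = lam * ‖s t‖ ^ 2 + ‖Λhat t‖ ^ 2 := by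
    unfold slidingLyapunov; field_simp
  rw [this]; nlinarith [sq_nonneg ‖s t‖]

theorem exists_tendsto_norm_sq_of_hasDerivWithinAt_slidingLyapunov {μ₁ lam : ℝ}
    {s Λhat Λhat' : ℝ → EuclideanSpace ℝ ι} (hμ₁ : 0 ≤ μ₁) (hlam : 0 < lam)
    (hL : ∀ t ∈ Ici (0 : ℝ),
      HasDerivWithinAt (slidingLyapunov lam s Λhat) (-μ₁ * ‖s t‖ ^ 2) (Ici 0) t)
    (hΛhat : ∀ t ∈ Ici (0 : ℝ), HasDerivWithinAt Λhat (Λhat' t) (Ici 0) t)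
    (hΛhat' : ∀ t ∈ Ici (0 : ℝ), ∀ i, 0 ≤ Λhat' t i) :
    ∃ ℓ, Tendsto (‖s ·‖ ^ 2) atTop (𝓝 ℓ) := by
  set L := slidingLyapunov lam s Λhat
  have hL_anti : AntitoneOn L (Ici 0) :=
    (convex_Ici 0).antitoneOn_of_hasDerivWithinAt_nonpos hL fun t _ => by
      nlinarith [sq_nonneg ‖s t‖]
  obtain ⟨ℓL, hℓL⟩ := hL_anti.exists_tendsto_atTop
    ⟨0, forall_mem_image.mpr fun t _ => slidingLyapunov_nonneg hlam.le s Λhat t⟩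
  have hΛhat_le : ∀ i, ∀ t ∈ Ici (0 : ℝ), Λhat t i ≤ √(2 * lam * L 0) := fun i t ht =>
    calc Λhat t i ≤ ‖Λhat t‖ := (le_abs_self _).trans (PiLp.norm_apply_le (Λhat t) i)
      _ ≤ √(2 * lam * L 0) := Real.le_sqrt_of_sq_le <|
          (norm_sq_le_slidingLyapunov hlam s Λhat t).trans <| by
            gcongr; exact hL_anti self_mem_Ici ht ht
  have hΛhat_tendsto : ∀ i, ∃ l, Tendsto (fun t => Λhat t i) atTop (𝓝 l) := fun i =>
    ((convex_Ici 0).monotoneOn_of_hasDerivWithinAt_nonneg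
      (fun t ht => EuclideanSpace.hasDerivWithinAt_apply (hΛhat t ht) i)
      (fun t ht => hΛhat' t ht i)).exists_tendsto_atTop
      ⟨_, forall_mem_image.mpr (hΛhat_le i)⟩
  choose l hl using hΛhat_tendsto
  have hs_eq : (‖s ·‖ ^ 2) = fun t => 2 * L t - (∑ i, Λhat t i ^ 2) / lam := by
    funext t
    simp only [L, slidingLyapunov, ← EuclideanSpace.real_norm_sq_eq]
    field_simp
    ring
  rw [hs_eq]
  exact ⟨_, (hℓL.const_mul 2).sub ((tendsto_finsetSum _ fun i _ => (hl i).pow 2).div_const lam)⟩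

end SlidingDynamics

theorem qasmc_sliding_convergence_general (μ₁ lam : ℝ) (hμ₁ : 0 < μ₁) (hlam : 0 < lam)
    (s Λhat : ℝ → EuclideanSpace ℝ (Fin 3)) (s' Λhat' : ℝ → EuclideanSpace ℝ (Fin 3))
    (hs : ∀ t ∈ Set.Ici (0:ℝ), HasDerivWithinAt s (s' t) (Set.Ici 0) t)
    (hΛhat : ∀ t ∈ Set.Ici (0:ℝ), HasDerivWithinAt Λhat (Λhat' t) (Set.Ici 0) t)
    (hclosed : ∀ t ∈ Set.Ici (0:ℝ),
      ⟪s t, s' t⟫ = -μ₁ * ‖s t‖ ^ 2 - ∑ i, Λhat t i * |s t i|)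
    (hadapt : ∀ t ∈ Set.Ici (0:ℝ), ∀ i, Λhat' t i = lam * |s t i|) :
    Filter.Tendsto s Filter.atTop (nhds 0) := by
  have hL : ∀ t ∈ Ici (0 : ℝ),
      HasDerivWithinAt (slidingLyapunov lam s Λhat) (-μ₁ * ‖s t‖ ^ 2) (Ici 0) t := fun t ht =>
    hasDerivWithinAt_slidingLyapunov hlam.ne' (hs t ht) (hΛhat t ht) (hclosed t ht) (hadapt t ht)
  obtain ⟨ℓ, hℓ⟩ := exists_tendsto_norm_sq_of_hasDerivWithinAt_slidingLyapunov hμ₁.le hlam hL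
    hΛhat fun t ht i => by rw [hadapt t ht i]; positivity
  have hμ₁ℓ : μ₁ * ℓ ≤ 0 := nonpos_of_tendsto_of_hasDerivWithinAt_le_neg hL
    (fun t _ => (neg_mul _ _).le) (fun t _ => slidingLyapunov_nonneg hlam.le s Λhat t)
    (hℓ.const_mul μ₁)
  have hℓ_zero : ℓ = 0 :=
    le_antisymm (nonpos_of_mul_nonpos_right hμ₁ℓ hμ₁) (ge_of_tendsto' hℓ fun t => by positivity)
  rw [hℓ_zero] at hℓ
  exact tendsto_zero_iff_norm_tendsto_zero.mpr (by simpa using hℓ.sqrt)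

/-- **Theorem 2 (convergence of the sliding variable).** Along the closed-loop sliding
dynamics `⟨s, s′⟩ = −μ₁‖s‖² − Σᵢ Λ̂ᵢ|sᵢ|` with adaptation law `Λ̂ᵢ′ = λ|sᵢ|`, the sliding
variable satisfies `s(t) → 0` as `t → ∞`. -/
theorem qasmc_sliding_convergence (μ₁ lam : ℝ) (hμ₁ : 0 < μ₁) (hlam : 0 < lam)
    (Λ : EuclideanSpace ℝ (Fin 3)) (hΛ : ∀ i, 0 < Λ i)
    (s Λhat : ℝ → EuclideanSpace ℝ (Fin 3)) (s' Λhat' : ℝ → EuclideanSpace ℝ (Fin 3))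
    (hs : ∀ t ∈ Set.Ici (0:ℝ), HasDerivWithinAt s (s' t) (Set.Ici 0) t)
    (hΛhat : ∀ t ∈ Set.Ici (0:ℝ), HasDerivWithinAt Λhat (Λhat' t) (Set.Ici 0) t)
    (hclosed : ∀ t ∈ Set.Ici (0:ℝ),
      ⟪s t, s' t⟫ = -μ₁ * ‖s t‖ ^ 2 - ∑ i, Λhat t i * |s t i|)
    (hadapt : ∀ t ∈ Set.Ici (0:ℝ), ∀ i, Λhat' t i = lam * |s t i|) :
    Filter.Tendsto s Filter.atTop (nhds 0) :=
  qasmc_sliding_convergence_general μ₁ lam hμ₁ hlam s Λhat s' Λhat' hs hΛhat hclosed hadapt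
end

section
/- Let m > 0, g ∈ ℝ, and Fx, Fy, Fz ∈ ℝ, and set ℑ := m √(Fx² + Fy² + (Fz + g)²). Assume ℑ + m(g + Fz) > 0. Define q₀d := √( m(g + Fz)/(2ℑ) + 1/2 ), q₁d := −m Fy / (2 ℑ q₀d), q₂d := m Fx / (2 ℑ q₀d), and q₃d := 0. Then 0 < q₀d ≤ 1 and q₀d² + q₁d² + q₂d² + q₃d² = 1, i.e., (q₀d, q₁d, q₂d, q₃d) is a unit quaternion. -/
/-- **Singularity-free desired attitude extraction (equations (23)–(24)).** With total
thrust `ℑ = m√(Fx² + Fy² + (Fz+g)²)` and `ℑ + m(g+Fz) > 0`, the quadruple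
`(q₀d, q₁d, q₂d, q₃d)` of equation (24) satisfies `0 < q₀d ≤ 1` and is a unit quaternion. -/
theorem desired_quaternion_unit (m g Fx Fy Fz : ℝ) (hm : 0 < m)
    (T : ℝ) (hT : T = m * Real.sqrt (Fx ^ 2 + Fy ^ 2 + (Fz + g) ^ 2))
    (hpos : 0 < T + m * (g + Fz))
    (q0d q1d q2d q3d : ℝ)
    (hq0d : q0d = Real.sqrt (m * (g + Fz) / (2 * T) + 1 / 2))
    (hq1d : q1d = -(m * Fy) / (2 * T * q0d))
    (hq2d : q2d = m * Fx / (2 * T * q0d))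
    (hq3d : q3d = 0) :
    (0 < q0d ∧ q0d ≤ 1) ∧ q0d ^ 2 + q1d ^ 2 + q2d ^ 2 + q3d ^ 2 = 1 := by
  have hsum : (0:ℝ) ≤ Fx ^ 2 + Fy ^ 2 + (Fz + g) ^ 2 := by positivity
  have habs : |Fz + g| ≤ Real.sqrt (Fx ^ 2 + Fy ^ 2 + (Fz + g) ^ 2) := by
    rw [← Real.sqrt_sq_eq_abs]
    exact Real.sqrt_le_sqrt (by nlinarith)
  have hge : m * (g + Fz) ≤ T := by
    rw [hT]
    nlinarith [le_abs_self (Fz + g), habs, hm.le]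
  have hge' : -(m * (g + Fz)) ≤ T := by
    rw [hT]
    nlinarith [neg_abs_le (Fz + g), habs, hm.le]
  have hTpos : 0 < T := by linarith
  have harg : m * (g + Fz) / (2 * T) + 1 / 2 = (T + m * (g + Fz)) / (2 * T) := by
    field_simp; ring
  have hargpos : 0 < m * (g + Fz) / (2 * T) + 1 / 2 := by
    rw [harg]; positivity
  have hq0pos : 0 < q0d := by rw [hq0d]; exact Real.sqrt_pos.mpr hargpos
  have hq0sq : q0d ^ 2 = m * (g + Fz) / (2 * T) + 1 / 2 := by
    rw [hq0d, Real.sq_sqrt hargpos.le]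
  have hq0le : q0d ≤ 1 := by
    have h1 : m * (g + Fz) / (2 * T) + 1 / 2 ≤ 1 := by
      rw [harg, div_le_one (by positivity)]
      linarith
    nlinarith [hq0sq]
  have hTsq : T ^ 2 = m ^ 2 * (Fx ^ 2 + Fy ^ 2 + (Fz + g) ^ 2) := by
    rw [hT, mul_pow, Real.sq_sqrt hsum]
  refine ⟨⟨hq0pos, hq0le⟩, ?_⟩
  have hq0ne : q0d ≠ 0 := ne_of_gt hq0pos
  have hTne : T ≠ 0 := ne_of_gt hTpos
  rw [hq1d, hq2d, hq3d]
  have key : 2 * T * q0d ^ 2 = T + m * (g + Fz) := by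
    rw [hq0sq]; field_simp; ring
  field_simp
  linear_combination (2 * T * q0d ^ 2 - T + m * (g + Fz)) * key - hTsq
end

section
/- Let m > 0, g ∈ ℝ, and Fx, Fy, Fz ∈ ℝ, and set ℑ := m √(Fx² + Fy² + (Fz + g)²). Assume ℑ + m(g + Fz) > 0, and define q₀d := √( m(g + Fz)/(2ℑ) + 1/2 ), q₁d := −m Fy / (2 ℑ q₀d), q₂d := m Fx / (2 ℑ q₀d), q₃d := 0. Then ℑ · (q₀d² − q₁d² − q₂d² + q₃d²) = m (g + Fz). -/
/-!
With `cos θ = m (g + Fz) / ℑ` the cosine of the tilt of the commanded thrust, `q₀d = cos (θ / 2)`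
by the half-angle formula, and since `m² (Fx² + Fy²) = ℑ² - m² (g + Fz)²` the horizontal
components satisfy `q₁d² + q₂d² = sin² (θ / 2)`. Hence `q₀d² - q₁d² - q₂d² = cos θ`.
-/

lemma mul_le_mul_sqrt_add_sq_add_sq {m z : ℝ} (hm : 0 ≤ m) (x y : ℝ) :
    m * z ≤ m * √(x ^ 2 + y ^ 2 + z ^ 2) :=
  mul_le_mul_of_nonneg_left (Real.le_sqrt_of_sq_le (by nlinarith [sq_nonneg x, sq_nonneg y])) hm

lemma two_mul_mul_sqrt_div_two_mul_add_half_sq {T A : ℝ} (hT : 0 < T) (hTA : 0 < T + A) :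
    2 * T * √(A / (2 * T) + 1 / 2) ^ 2 = T + A := by
  have harg : A / (2 * T) + 1 / 2 = (T + A) / (2 * T) := by field_simp; ring
  rw [Real.sq_sqrt (harg ▸ by positivity), harg]
  field_simp

lemma mul_sq_sub_sq_sub_sq_eq_of_two_mul_sq_eq {T A a b q : ℝ} (hT : T ≠ 0) (hq : q ≠ 0)
    (hcos : 2 * T * q ^ 2 = T + A) (hsin : a ^ 2 + b ^ 2 = T ^ 2 - A ^ 2) :
    T * (q ^ 2 - (a / (2 * T * q)) ^ 2 - (b / (2 * T * q)) ^ 2) = A := by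
  field_simp
  linear_combination (2 * T * q ^ 2 - A + T) * hcos - hsin

/-- **Vertical thrust identity for the desired quaternion (equations (22)–(24)).**
The desired quaternion of equation (24) reproduces the commanded vertical thrust
component: `ℑ (q₀d² − q₁d² − q₂d² + q₃d²) = m(g + Fz)`. -/
theorem desired_quaternion_vertical_thrust (m g Fx Fy Fz : ℝ) (hm : 0 < m)
    (T : ℝ) (hT : T = m * Real.sqrt (Fx ^ 2 + Fy ^ 2 + (Fz + g) ^ 2))
    (hpos : 0 < T + m * (g + Fz))
    (q0d q1d q2d q3d : ℝ)
    (hq0d : q0d = Real.sqrt (m * (g + Fz) / (2 * T) + 1 / 2))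
    (hq1d : q1d = -(m * Fy) / (2 * T * q0d))
    (hq2d : q2d = m * Fx / (2 * T * q0d))
    (hq3d : q3d = 0) :
    T * (q0d ^ 2 - q1d ^ 2 - q2d ^ 2 + q3d ^ 2) = m * (g + Fz) := by
  have hvert : m * (g + Fz) ≤ T := by
    rw [hT, add_comm g]
    exact mul_le_mul_sqrt_add_sq_add_sq hm.le Fx Fy
  have hTpos : 0 < T := by linarith
  have hcos : 2 * T * q0d ^ 2 = T + m * (g + Fz) :=
    hq0d ▸ two_mul_mul_sqrt_div_two_mul_add_half_sq hTpos hpos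
  have hq0 : q0d ≠ 0 := by
    rintro rfl
    norm_num at hcos
    linarith
  have hsin : (-(m * Fy)) ^ 2 + (m * Fx) ^ 2 = T ^ 2 - (m * (g + Fz)) ^ 2 := by
    rw [hT]
    linear_combination -m ^ 2 * Real.sq_sqrt (by positivity : 0 ≤ Fx ^ 2 + Fy ^ 2 + (Fz + g) ^ 2)
  rw [hq1d, hq2d, hq3d, sq 0, mul_zero, add_zero]
  exact mul_sq_sub_sq_sub_sq_eq_of_two_mul_sq_eq hTpos.ne' hq0 hcos hsin
end
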